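/- arXiv:1703.05881 — 9 statements merged into one kernel-verified Lean document; each statement's English description precedes it below -/
import Mathlib

section
/- Let W be a type, let Adj : W → W → Prop be the equality relation on W, and let (V, C) be a labeled instance whose underlying graph is connected, i.e. the reflexive–transitive–symmetric closure of the relation "x and y are the endpoints of some labeled edge of C" relates every pair of vertices of V. If f and g are correspondence homomorphisms of (V, C) to H and f x₀ = g x₀ for some vertex x₀ : V, then f = g. -/
/-- If `H` is a reflexive co-clique (adjacency is equality) and the instance `(V, C)`
is connected, then a correspondence homomorphism is determined by its value at any
single vertex. -/
theorem stmt_2 {W V : Type*} (Adj : W → W → Prop) (hAdj : ∀ u v : W, Adj u v ↔ u = v)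
    (C : Set (V × V × Equiv.Perm W × Equiv.Perm W)) (hC : C.Finite)
    (hconn : ∀ x y : V, Relation.EqvGen (fun x y : V => ∃ e ∈ C, e.1 = x ∧ e.2.1 = y) x y)
    (f g : V → W)
    (hf : ∀ e ∈ C, Adj (e.2.2.1 (f e.1)) (e.2.2.2 (f e.2.1)))
    (hg : ∀ e ∈ C, Adj (e.2.2.1 (g e.1)) (e.2.2.2 (g e.2.1)))
    (x₀ : V) (hx₀ : f x₀ = g x₀) : f = g := by
  have key : ∀ x y : V, Relation.EqvGen (fun x y : V => ∃ e ∈ C, e.1 = x ∧ e.2.1 = y) x y →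
      (f x = g x ↔ f y = g y) := by
    intro x y h
    induction h with
    | rel a b hab =>
      obtain ⟨e, heC, h1, h2⟩ := hab
      have hfe := (hAdj _ _).mp (hf e heC)
      have hge := (hAdj _ _).mp (hg e heC)
      subst h1 h2
      constructor
      · intro h
        have := hfe.symm.trans (h ▸ hge)
        exact e.2.2.2.injective this
      · intro h
        have : e.2.2.1 (f e.1) = e.2.2.1 (g e.1) := hfe.trans (h ▸ hge.symm)
        exact e.2.2.1.injective this
    | refl a => rfl
    | symm a b _ ih => exact ih.symm
    | trans a b c _ _ ih1 ih2 => exact ih1.trans ih2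
  funext x
  exact (key x₀ x (hconn x₀ x)).mp hx₀
end

section
/- Let W = ZMod 2 × ZMod 2 and let Adj p q ↔ p.1 = q.1 (this is the reflexive graph 2K₂: two disjoint looped edges). For all permutations π, ρ of W there exist a, b, a', b', c : ZMod 2 with (a, b) ≠ (0, 0) and (a', b') ≠ (0, 0) such that for all p, q : W, Adj (π p) (ρ q) holds if and only if a * p.1 + b * p.2 + a' * q.1 + b' * q.2 = c. (Hence each correspondence constraint for the reflexive 2K₂ is a linear equation modulo two, and existence of a correspondence homomorphism to reflexive 2K₂ reduces to solvability of a linear system over ZMod 2.) -/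
set_option synthInstance.maxSize 400 in
set_option maxHeartbeats 4000000 in
lemma aux4 (f g : (ZMod 2 × ZMod 2) → ZMod 2)
    (hf : (Finset.univ.filter (fun p => f p = 0)).card = 2) (hg : (Finset.univ.filter (fun p => g p = 0)).card = 2) :
    ∃ a b a' b' c : ZMod 2,
      (a, b) ≠ ((0 : ZMod 2), (0 : ZMod 2)) ∧ (a', b') ≠ ((0 : ZMod 2), (0 : ZMod 2)) ∧
      ∀ p q : ZMod 2 × ZMod 2,
        (f p = g q ↔ a * p.1 + b * p.2 + a' * q.1 + b' * q.2 = c) := by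
  revert hf hg
  revert f g
  decide

/-- For the reflexive `2K₂` on `ZMod 2 × ZMod 2` (adjacency: equal first coordinates),
every correspondence constraint `Adj (π p) (ρ q)` is a linear equation modulo two. -/
theorem stmt_4 (π ρ : Equiv.Perm (ZMod 2 × ZMod 2)) :
    ∃ a b a' b' c : ZMod 2,
      (a, b) ≠ ((0 : ZMod 2), (0 : ZMod 2)) ∧ (a', b') ≠ ((0 : ZMod 2), (0 : ZMod 2)) ∧
      ∀ p q : ZMod 2 × ZMod 2,
        ((π p).1 = (ρ q).1 ↔ a * p.1 + b * p.2 + a' * q.1 + b' * q.2 = c) := by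
  have key : ∀ σ : Equiv.Perm (ZMod 2 × ZMod 2),
      (Finset.univ.filter (fun p => (σ p).1 = 0)).card = 2 := by
    intro σ
    have e : {p // (σ p).1 = 0} ≃ {q : ZMod 2 × ZMod 2 // q.1 = 0} :=
      σ.subtypeEquiv (fun a => Iff.rfl)
    rw [← Fintype.card_subtype, Fintype.card_congr e, Fintype.card_subtype]
    decide
  exact aux4 (fun p => (π p).1) (fun q => (ρ q).1) (key π) (key ρ)
end

section
/- Let W = ZMod 2 × ZMod 2 and let Adj p q ↔ p.1 ≠ q.1 (this is the irreflexive complete bipartite graph K₂,₂ with parts given by the first coordinate). For all permutations π, ρ of W there exist a, b, a', b', c : ZMod 2 with (a, b) ≠ (0, 0) and (a', b') ≠ (0, 0) such that for all p, q : W, Adj (π p) (ρ q) holds if and only if a * p.1 + b * p.2 + a' * q.1 + b' * q.2 = c. (Hence the correspondence homomorphism problem for K₂,₂ reduces to linear equations modulo two.) -/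
set_option maxHeartbeats 1000000 in
lemma aux_affine : ∀ π : Equiv.Perm (ZMod 2 × ZMod 2),
    ∃ a b c : ZMod 2, (a, b) ≠ ((0 : ZMod 2), (0 : ZMod 2)) ∧
      ∀ p : ZMod 2 × ZMod 2, (π p).1 = a * p.1 + b * p.2 + c := by decide

/-- For the irreflexive `K₂,₂` on `ZMod 2 × ZMod 2` (adjacency: distinct first
coordinates), every correspondence constraint `Adj (π p) (ρ q)` is a linear equation
modulo two. -/
theorem stmt_5 (π ρ : Equiv.Perm (ZMod 2 × ZMod 2)) :
    ∃ a b a' b' c : ZMod 2,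
      (a, b) ≠ ((0 : ZMod 2), (0 : ZMod 2)) ∧ (a', b') ≠ ((0 : ZMod 2), (0 : ZMod 2)) ∧
      ∀ p q : ZMod 2 × ZMod 2,
        ((π p).1 ≠ (ρ q).1 ↔ a * p.1 + b * p.2 + a' * q.1 + b' * q.2 = c) := by
  obtain ⟨a, b, c₁, h1, hf⟩ := aux_affine π
  obtain ⟨a', b', c₂, h2, hg⟩ := aux_affine ρ
  refine ⟨a, b, a', b', 1 + c₁ + c₂, h1, h2, fun p q => ?_⟩
  rw [hf, hg]
  have key : ∀ x y : ZMod 2, x ≠ y ↔ x + y = 1 := by decide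
  rw [key]
  have e : (2 : ZMod 2) = 0 := by decide
  constructor <;> intro h
  · linear_combination h - e * c₁ - e * c₂
  · linear_combination h + e * c₁ + e * c₂
end

section
/- Let W be a finite type with cardinality n, let Adj : W → W → Prop be a symmetric relation, and let π, ρ be permutations of W. If f : Fin (n + 1) → W satisfies Adj (π (f i)) (ρ (f j)) for all i ≠ j, then there exists w : W with Adj (π w) (ρ w). (This is the key lemma showing that a loop with label (π, ρ) can be simulated by a clique of n + 1 vertices all of whose edges carry the label (π, ρ).) -/
/-- If `W` has `n` elements and `f : Fin (n + 1) → W` satisfies the correspondence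
constraint `Adj (π (f i)) (ρ (f j))` for all `i ≠ j`, then some `w : W` satisfies the
loop constraint `Adj (π w) (ρ w)`. -/
theorem stmt_6 {W : Type*} [Fintype W] {n : ℕ} (hn : Fintype.card W = n)
    (Adj : W → W → Prop) (hsymm : ∀ u v : W, Adj u v → Adj v u)
    (π ρ : Equiv.Perm W) (f : Fin (n + 1) → W)
    (hf : ∀ i j : Fin (n + 1), i ≠ j → Adj (π (f i)) (ρ (f j))) :
    ∃ w : W, Adj (π w) (ρ w) := by
  obtain ⟨i, j, hij, hfij⟩ := Fintype.exists_ne_map_eq_of_card_lt f (by simp [hn])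
  exact ⟨f i, hfij ▸ hf i j hij⟩
end

section
/- For every positive integer n there exist a positive integer N and a bipartite graph B : Fin N → Fin N → Prop such that for all finite sets S, T ⊆ Fin N with n * |S| ≥ N and n * |T| ≥ N, there exist s ∈ S and t ∈ T with B s t, and there exist s' ∈ S and t' ∈ T with ¬ B s' t'. (Such expander-like bipartite graphs are used to simulate parallel edges by simple edges.) -/
/-!
Take `k ≥ n²` with `2 ^ k = k * M`, read the left vertices as vectors `x ∈ {0,1}^k` and the right
vertices as pairs `(i, j) ∈ [k] × [M]`, and join `x` to `(i, j)` when `x i = 1`. If no edge of `B`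
(or of its complement) runs between `S` and `T`, every `x ∈ S` is constant on the set `P` of
coordinates used by `T`. Then `|S| ≤ 2 ^ (k - |P|)` and `|T| ≤ |P| M`, so density `1/n` of both
sides forces `2 ^ |P| ≤ n ≤ |P|`, which is absurd.
-/

open Finset

theorem card_mul_pow_le_of_eqOn {ι β : Type*} [Fintype ι] [DecidableEq ι] [Fintype β]
    {S : Finset (ι → β)} {P : Finset ι} {c : ι → β} (h : ∀ x ∈ S, Set.EqOn x c P) :
    #S * Fintype.card β ^ #P ≤ Fintype.card β ^ Fintype.card ι := by
  have hS : #S ≤ Fintype.card β ^ #Pᶜ := by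
    have hinj : Set.InjOn (fun (x : ι → β) (i : ↥Pᶜ) => x i) S := by
      intro x hx y hy hxy
      funext i
      by_cases hi : i ∈ P
      · rw [h x hx hi, h y hy hi]
      · exact congrFun hxy ⟨i, mem_compl.mpr hi⟩
    simpa [card_compl] using
      card_le_card_of_injOn (t := univ) _ (fun _ _ => mem_coe.2 (mem_univ _)) hinj
  calc #S * Fintype.card β ^ #P ≤ Fintype.card β ^ #Pᶜ * Fintype.card β ^ #P := by gcongr
    _ = Fintype.card β ^ Fintype.card ι := by rw [← pow_add, card_compl_add_card]

theorem exists_mem_apply_fst_eq {ι J : Type*} [Fintype ι] [DecidableEq ι] [Fintype J]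
    [Nonempty J] [DecidableEq J] {n : ℕ} (hn : n * n ≤ Fintype.card ι) {S : Finset (ι → Bool)}
    {T : Finset (ι × J)} (hS : 2 ^ Fintype.card ι ≤ n * #S)
    (hT : Fintype.card ι * Fintype.card J ≤ n * #T) (b : Bool) :
    ∃ x ∈ S, ∃ t ∈ T, x t.1 = b := by
  by_contra! h
  set P := T.image Prod.fst
  have hSP : ∀ x ∈ S, Set.EqOn x (fun _ => !b) P := by
    intro x hx i hi
    obtain ⟨t, ht, rfl⟩ := mem_image.mp hi
    exact Bool.eq_not.mpr (h x hx t ht)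
  have hTP : #T ≤ #P * Fintype.card J := by
    simpa using card_le_card (subset_product.trans (product_subset_product_right (subset_univ _)))
  have hPn : 2 ^ #P ≤ n := by
    have hS2 := card_mul_pow_le_of_eqOn hSP
    rw [Fintype.card_bool] at hS2
    refine Nat.le_of_mul_le_mul_left ?_ (pow_pos two_pos (Fintype.card ι))
    calc 2 ^ Fintype.card ι * 2 ^ #P ≤ n * #S * 2 ^ #P := by gcongr
      _ ≤ 2 ^ Fintype.card ι * n := by nlinarith
  have hnP : n ≤ #P := by
    have hJ : 0 < Fintype.card J := Fintype.card_pos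
    refine Nat.le_of_mul_le_mul_left ?_ (Nat.one_le_two_pow.trans hPn)
    nlinarith
  exact (Nat.lt_two_pow_self.trans_le ((Nat.pow_le_pow_right two_pos hnP).trans hPn)).false

theorem stmt_7_general (n : ℕ) :
    ∃ N : ℕ, 0 < N ∧ ∃ B : Fin N → Fin N → Prop,
      ∀ S T : Finset (Fin N), N ≤ n * S.card → N ≤ n * T.card →
        (∃ s ∈ S, ∃ t ∈ T, B s t) ∧ (∃ s' ∈ S, ∃ t' ∈ T, ¬ B s' t') := by
  set k := 2 ^ (n * n)
  set M := 2 ^ (k - n * n)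
  have hN : 2 ^ k = k * M := by rw [← pow_add, Nat.add_sub_cancel' Nat.lt_two_pow_self.le]
  let eS : Fin (2 ^ k) ≃ (Fin k → Bool) := Fintype.equivOfCardEq (by simp)
  let eT : Fin (2 ^ k) ≃ Fin k × Fin M := (finCongr hN).trans finProdFinEquiv.symm
  refine ⟨2 ^ k, by positivity, fun s t => eS s (eT t).1 = true, fun S T hS hT => ?_⟩
  have hit (b : Bool) : ∃ s ∈ S, ∃ t ∈ T, eS s (eT t).1 = b := by
    obtain ⟨x, hx, y, hy, hxy⟩ := exists_mem_apply_fst_eq (J := Fin M)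
      (by simpa using Nat.lt_two_pow_self.le) (S := S.map eS.toEmbedding)
      (T := T.map eT.toEmbedding) (by simpa using hS) (by simpa [← hN] using hT) b
    obtain ⟨s, hs, rfl⟩ := mem_map.mp hx
    obtain ⟨t, ht, rfl⟩ := mem_map.mp hy
    exact ⟨s, hs, t, ht, hxy⟩
  obtain ⟨s, hs, t, ht, hst⟩ := hit true
  obtain ⟨s', hs', t', ht', hst'⟩ := hit false
  exact ⟨⟨s, hs, t, ht, hst⟩, ⟨s', hs', t', ht', by simp [hst']⟩⟩

/-- Expander-like bipartite graphs exist: for every positive `n` there are `N > 0` and a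
bipartite graph `B` on `Fin N` versus `Fin N` such that any two sets of size at least
`N / n` are joined by an edge of `B` and by an edge of the bipartite complement of `B`. -/
theorem stmt_7 (n : ℕ) (hn : 0 < n) :
    ∃ N : ℕ, 0 < N ∧ ∃ B : Fin N → Fin N → Prop,
      ∀ S T : Finset (Fin N), N ≤ n * S.card → N ≤ n * T.card →
        (∃ s ∈ S, ∃ t ∈ T, B s t) ∧ (∃ s' ∈ S, ∃ t' ∈ T, ¬ B s' t') :=
  stmt_7_general n
end

section
/- Let W = {a, b, c} with Adj the reflexive symmetric relation with loops at a, b, c, the edge between b and c, and no other edges (H = K₁ ∪ K₂). For all n, m : ℕ and every family of triples T : Fin m → Fin n × Fin n × Fin n, the following are equivalent: (1) there exists σ : Fin n → Bool such that for every j : Fin m, writing T j = (p, q, r), exactly one of σ p, σ q, σ r is true (the 1-in-3-SAT instance is satisfiable); (2) there exist f : Fin n → W and g : Fin m → W such that for every j : Fin m, writing T j = (p, q, r), Adj (f p) (g j), Adj (f q) (swap a b (g j)), and Adj (f r) (swap a c (g j)) all hold. -/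
/-- Reduction from 1-in-3-SAT (without negated variables) to the correspondence
`(K₁ ∪ K₂)`-homomorphism problem: the instance given by the triples `T` is satisfiable
iff the corresponding labeled graph admits a correspondence homomorphism. -/
theorem stmt_9 {W : Type*} [DecidableEq W] (a b c : W)
    (hab : a ≠ b) (hac : a ≠ c) (hbc : b ≠ c)
    (hW : ∀ w : W, w = a ∨ w = b ∨ w = c)
    (Adj : W → W → Prop)
    (hAdj : ∀ u v : W, Adj u v ↔ u = v ∨ (u = b ∧ v = c) ∨ (u = c ∧ v = b))
    (n m : ℕ) (T : Fin m → Fin n × Fin n × Fin n) :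
    (∃ σ : Fin n → Bool, ∀ j : Fin m,
        ((σ (T j).1 = true ∧ σ (T j).2.1 = false ∧ σ (T j).2.2 = false) ∨
         (σ (T j).1 = false ∧ σ (T j).2.1 = true ∧ σ (T j).2.2 = false) ∨
         (σ (T j).1 = false ∧ σ (T j).2.1 = false ∧ σ (T j).2.2 = true))) ↔
    (∃ f : Fin n → W, ∃ g : Fin m → W, ∀ j : Fin m,
        Adj (f (T j).1) (g j) ∧
        Adj (f (T j).2.1) (Equiv.swap a b (g j)) ∧
        Adj (f (T j).2.2) (Equiv.swap a c (g j))) := by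
  have sab : Equiv.swap a b a = b := Equiv.swap_apply_left a b
  have sab' : Equiv.swap a b b = a := Equiv.swap_apply_right a b
  have sab'' : Equiv.swap a b c = c := Equiv.swap_apply_of_ne_of_ne hac.symm hbc.symm
  have sac : Equiv.swap a c a = c := Equiv.swap_apply_left a c
  have sac' : Equiv.swap a c c = a := Equiv.swap_apply_right a c
  have sac'' : Equiv.swap a c b = b := Equiv.swap_apply_of_ne_of_ne hab.symm hbc
  constructor
  · rintro ⟨σ, h⟩
    refine ⟨fun i => if σ i then a else b,
      fun j => if σ (T j).1 then a else if σ (T j).2.1 then b else c, fun j => ?_⟩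
    rcases h j with ⟨h1, h2, h3⟩ | ⟨h1, h2, h3⟩ | ⟨h1, h2, h3⟩ <;>
      simp only [h1, h2, h3, if_true, if_false, Bool.false_eq_true] <;>
      simp [hAdj, sab, sab', sab'', sac, sac', sac'']
  · rintro ⟨f, g, h⟩
    refine ⟨fun i => decide (f i = a), fun j => ?_⟩
    obtain ⟨h1, h2, h3⟩ := h j
    rcases hW (g j) with hg | hg | hg <;> rw [hg] at h1 h2 h3
    · rw [sab] at h2; rw [sac] at h3
      rw [hAdj] at h1 h2 h3
      left
      refine ⟨?_, ?_, ?_⟩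
      · rcases h1 with h | ⟨_, h⟩ | ⟨_, h⟩ <;> simp_all
      · rcases h2 with h | ⟨h, _⟩ | ⟨h, _⟩ <;> simp [h, hab.symm, hac.symm]
      · rcases h3 with h | ⟨h, _⟩ | ⟨h, _⟩ <;> simp [h, hab.symm, hac.symm]
    · rw [sab'] at h2; rw [sac''] at h3
      rw [hAdj] at h1 h2 h3
      right; left
      refine ⟨?_, ?_, ?_⟩
      · rcases h1 with h | ⟨h, _⟩ | ⟨h, _⟩ <;> simp [h, hab.symm, hac.symm] <;> simp_all
      · rcases h2 with h | ⟨_, h⟩ | ⟨_, h⟩ <;> simp_all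
      · rcases h3 with h | ⟨h, _⟩ | ⟨h, _⟩ <;> simp [h, hab.symm, hac.symm]
    · rw [sab''] at h2; rw [sac'] at h3
      rw [hAdj] at h1 h2 h3
      right; right
      refine ⟨?_, ?_, ?_⟩
      · rcases h1 with h | ⟨h, _⟩ | ⟨h, _⟩ <;> simp [h, hab.symm, hac.symm] <;> simp_all
      · rcases h2 with h | ⟨h, _⟩ | ⟨h, _⟩ <;> simp [h, hab.symm, hac.symm] <;> simp_all
      · rcases h3 with h | ⟨_, h⟩ | ⟨_, h⟩ <;> simp_all
end

section
/- Let Adj : W → W → Prop be a reflexive symmetric relation on a type W, and let a, b : W with a ≠ b and ¬ Adj a b. Let (V, C) be a labeled instance and let C' be obtained from C by adding, for every vertex v : V, the loop (v, v, id, swap a b). Then there exists a correspondence homomorphism of (V, C') to H if and only if there exists a correspondence homomorphism f of (V, C) to H with f v ≠ a and f v ≠ b for every v : V. -/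
/-- Adding to every vertex `v` a loop labeled `(id, swap a b)`, for non-adjacent distinct
`a, b`, yields an instance admitting a correspondence homomorphism iff the original
instance admits one avoiding the images `a` and `b`. -/
theorem stmt_11 {W V : Type*} [DecidableEq W] (Adj : W → W → Prop)
    (hrefl : ∀ v : W, Adj v v) (hsymm : ∀ u v : W, Adj u v → Adj v u)
    (a b : W) (hab : a ≠ b) (hnadj : ¬ Adj a b)
    (C : Set (V × V × Equiv.Perm W × Equiv.Perm W)) (hC : C.Finite) :
    (∃ f : V → W,
        ∀ e ∈ C ∪ Set.range (fun v : V => (v, v, Equiv.refl W, Equiv.swap a b)),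
          Adj (e.2.2.1 (f e.1)) (e.2.2.2 (f e.2.1))) ↔
      (∃ f : V → W, (∀ e ∈ C, Adj (e.2.2.1 (f e.1)) (e.2.2.2 (f e.2.1))) ∧
        ∀ v : V, f v ≠ a ∧ f v ≠ b) := by
  constructor
  · rintro ⟨f, hf⟩
    refine ⟨f, fun e he => hf e (Or.inl he), fun v => ?_⟩
    have h := hf (v, v, Equiv.refl W, Equiv.swap a b) (Or.inr ⟨v, rfl⟩)
    simp only [Equiv.refl_apply] at h
    constructor
    · rintro rfl
      rw [Equiv.swap_apply_left] at h
      exact hnadj h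
    · rintro rfl
      rw [Equiv.swap_apply_right] at h
      exact hnadj (hsymm _ _ h)
  · rintro ⟨f, hf, hav⟩
    refine ⟨f, fun e he => ?_⟩
    rcases he with he | ⟨v, rfl⟩
    · exact hf e he
    · simp only [Equiv.refl_apply]
      rw [Equiv.swap_apply_of_ne_of_ne (hav v).1 (hav v).2]
      exact hrefl _
end

section
/- Let Adj : W → W → Prop be a reflexive symmetric relation on a type W and define Adj² u v ↔ ∃ w, Adj u w ∧ Adj w v (the square of H). Let (V, C) be a labeled instance, and let the subdivided instance have vertex type V ⊕ C and, for each labeled edge e = (x, y, π, ρ) in C, the two labeled edges (x, e, π, id) and (e, y, id, ρ). Then there exists a correspondence homomorphism of (V, C) to (W, Adj²) if and only if there exists a correspondence homomorphism of the subdivided instance to (W, Adj). -/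
/-- Subdivision reduces the correspondence homomorphism problem for the square `H²` to
the one for `H`: the instance `(V, C)` maps to `(W, Adj²)` iff the subdivided instance,
on vertex type `V ⊕ C` with edges `(x, e, π, id)` and `(e, y, id, ρ)` for each
`e = (x, y, π, ρ) ∈ C`, maps to `(W, Adj)`. -/
theorem stmt_14 {W V : Type*} (Adj : W → W → Prop)
    (hrefl : ∀ v : W, Adj v v) (hsymm : ∀ u v : W, Adj u v → Adj v u)
    (C : Set (V × V × Equiv.Perm W × Equiv.Perm W)) (hC : C.Finite) :
    (∃ f : V → W, ∀ e ∈ C,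
        ∃ w : W, Adj (e.2.2.1 (f e.1)) w ∧ Adj w (e.2.2.2 (f e.2.1))) ↔
      (∃ g : V ⊕ ↥C → W, ∀ e : ↥C,
        Adj (e.1.2.2.1 (g (Sum.inl e.1.1))) (Equiv.refl W (g (Sum.inr e))) ∧
        Adj (Equiv.refl W (g (Sum.inr e))) (e.1.2.2.2 (g (Sum.inl e.1.2.1)))) := by
  constructor
  · rintro ⟨f, hf⟩
    choose w hw1 hw2 using fun (e : ↥C) => hf e.1 e.2
    refine ⟨Sum.elim f w, fun e => ⟨hw1 e, hw2 e⟩⟩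
  · rintro ⟨g, hg⟩
    exact ⟨fun v => g (Sum.inl v), fun e he =>
      ⟨g (Sum.inr ⟨e, he⟩), (hg ⟨e, he⟩).1, (hg ⟨e, he⟩).2⟩⟩
end

section
/- Let W = {a, b, c} with Adj the reflexive symmetric relation with loops at a, b, c and edges between a, b and between b, c, but not between a and c (the reflexive path of length two). Let ρ₁ = swap a c, let π₂ be the permutation with π₂ a = c, π₂ b = a, π₂ c = b, and let ρ₂ = swap b c. Then for every simple graph G on a vertex type V and every f : V → W: f is a proper colouring of G (f x ≠ f y whenever x and y are adjacent in G) if and only if for all adjacent x, y in G, Adj (f x) (ρ₁ (f y)) and Adj (π₂ (f x)) (ρ₂ (f y)) both hold. Consequently G is 3-colourable if and only if such an f exists. -/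
/-- For `H` the reflexive path `a - b - c`, with `ρ₁ = swap a c`, `π₂` the 3-cycle
`a ↦ c, b ↦ a, c ↦ b` and `ρ₂ = swap b c`: a map `f : V → W` is a proper colouring of a
simple graph `G` iff it satisfies the correspondence constraints of the two parallel
edges on every edge of `G`; consequently `G` is 3-colourable iff such an `f` exists. -/
theorem stmt_18 {W V : Type*} [DecidableEq W] (a b c : W)
    (hab : a ≠ b) (hac : a ≠ c) (hbc : b ≠ c)
    (hW : ∀ w : W, w = a ∨ w = b ∨ w = c)
    (Adj : W → W → Prop)
    (hAdj : ∀ u v : W, Adj u v ↔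
      u = v ∨ (u = a ∧ v = b) ∨ (u = b ∧ v = a) ∨ (u = b ∧ v = c) ∨ (u = c ∧ v = b))
    (π₂ : Equiv.Perm W) (hπ₂a : π₂ a = c) (hπ₂b : π₂ b = a) (hπ₂c : π₂ c = b)
    (G : SimpleGraph V) :
    (∀ f : V → W,
      ((∀ x y : V, G.Adj x y → f x ≠ f y) ↔
        (∀ x y : V, G.Adj x y →
          Adj (f x) (Equiv.swap a c (f y)) ∧ Adj (π₂ (f x)) (Equiv.swap b c (f y))))) ∧
    (G.Colorable 3 ↔
      ∃ f : V → W, ∀ x y : V, G.Adj x y →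
        Adj (f x) (Equiv.swap a c (f y)) ∧ Adj (π₂ (f x)) (Equiv.swap b c (f y))) := by
  have key : ∀ u v : W, u ≠ v ↔
      (Adj u (Equiv.swap a c v) ∧ Adj (π₂ u) (Equiv.swap b c v)) := by
    intro u v
    rcases hW u with rfl | rfl | rfl <;> rcases hW v with rfl | rfl | rfl <;>
      simp [Equiv.swap_apply_left, Equiv.swap_apply_right,
        Equiv.swap_apply_of_ne_of_ne, hab, hac, hbc, hab.symm, hac.symm, hbc.symm,
        hπ₂a, hπ₂b, hπ₂c, hAdj, Ne.symm]
  have main : ∀ f : V → W,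
      ((∀ x y : V, G.Adj x y → f x ≠ f y) ↔
        (∀ x y : V, G.Adj x y →
          Adj (f x) (Equiv.swap a c (f y)) ∧ Adj (π₂ (f x)) (Equiv.swap b c (f y)))) := by
    intro f
    constructor
    · intro h x y hxy; exact (key _ _).mp (h x y hxy)
    · intro h x y hxy; exact (key _ _).mpr (h x y hxy)
  refine ⟨main, ?_⟩
  constructor
  · rintro ⟨C⟩
    refine ⟨fun v => if C v = 0 then a else if C v = 1 then b else c, (main _).mp ?_⟩
    intro x y hxy
    have hC : C x ≠ C y := C.valid hxy
    show (if C x = 0 then a else if C x = 1 then b else c) ≠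
      (if C y = 0 then a else if C y = 1 then b else c)
    clear key main hAdj
    generalize C x = i at hC ⊢
    generalize C y = j at hC ⊢
    fin_cases i <;> fin_cases j <;>
      simp_all [hab, hac, hbc, hab.symm, hac.symm, hbc.symm]
  · rintro ⟨f, hf⟩
    have hf' := (main f).mpr hf
    set e : W → Fin 3 := fun w => if w = a then 0 else if w = b then 1 else 2 with he
    refine ⟨SimpleGraph.Coloring.mk (fun v => e (f v)) ?_⟩
    intro x y hxy
    have hne := hf' x y hxy
    show e (f x) ≠ e (f y)
    rcases hW (f x) with h1 | h1 | h1 <;> rcases hW (f y) with h2 | h2 | h2 <;>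
      rw [h1, h2] at hne ⊢ <;>
      simp [he, hab, hac, hbc, hab.symm, hac.symm, hbc.symm] at hne ⊢
end
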